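/- Let N_r ≥ 1 be an integer and let η₁ > η₂ > 0. Then ∫₀^∞ [ log₂(1 + η₁ γ) − log₂(1 + η₂ γ) ] · γ^{N_r−1} e^{−γ} / (N_r−1)! dγ = Σ_{t=1}^{2} (−1)^{t−1} · (log₂ e / (N_r−1)!) · Σ_{λ=0}^{N_r−1} ((N_r−1)!/(N_r−1−λ)!) · [ (−1)^{N_r−λ−2} · η_t^{−(N_r−1−λ)} · e^{1/η_t} · Ei(−1/η_t) + Σ_{ς=1}^{N_r−1−λ} (ς−1)! · (−η_t)^{−(N_r−1−λ−ς)} ]. (The closed-form ergodic capacity of an intra-cell NOMA user in SSK-NOMA, where η₁ = Σ_{p=i}^{L} a_p ρ σ_i² and η₂ = Σ_{p=i+1}^{L} a_p ρ σ_i², Eqs. (39)–(40).) -/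

import Mathlib

open MeasureTheory Real Finset

/-- `negEi x` is the exponential integral `Ei(−x) = −∫_x^∞ e^{−t}/t dt` (for `x > 0`). -/
noncomputable def negEi (x : ℝ) : ℝ := -∫ t in Set.Ioi x, Real.exp (-t) / t

/-!
With `log₂ = log / log 2` the integral is a difference of the moments
`I_n(η) = ∫₀^∞ log(1 + ηγ) γⁿ e^{−γ} dγ`. Integrating by parts gives
`I_n = n I_{n−1} + η J_n`, where `J_n(η) = ∫₀^∞ γⁿ e^{−γ} / (1 + ηγ) dγ`, so
`I_n = ∑_l n!/(n−l)! · η J_{n−l}`. Since `(ηγ + 1) γᵐ / (1 + ηγ) = γᵐ`, the `J_m` satisfy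
`η J_{m+1} = m! − J_m`, and the shift `t = γ + 1/η` gives `η J_0 = −e^{1/η} Ei(−1/η)`;
unrolling this recursion produces the bracket of the closed form.
-/

open Set Filter Topology
open scoped Nat

theorem setIntegral_Ioi_comp_add_right (f : ℝ → ℝ) (a c : ℝ) :
    ∫ x in Ioi a, f (x + c) = ∫ x in Ioi (a + c), f x := by
  simpa [preimage_add_const_Ioi] using
    (measurePreserving_add_right volume c).setIntegral_preimage_emb
      (measurableEmbedding_addRight c) f (Ioi (a + c))

theorem integrableOn_pow_mul_exp_neg_Ioi (n : ℕ) :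
    IntegrableOn (fun x : ℝ => x ^ n * exp (-x)) (Ioi 0) := by
  refine (GammaIntegral_convergent (s := n + 1) (by positivity)).congr_fun (fun x _ => ?_)
    measurableSet_Ioi
  simp [mul_comm]

theorem integral_pow_mul_exp_neg_Ioi (n : ℕ) : ∫ x in Ioi (0 : ℝ), x ^ n * exp (-x) = n ! := by
  rw [← Gamma_nat_eq_factorial, Gamma_eq_integral (by positivity)]
  refine setIntegral_congr_fun measurableSet_Ioi (fun x _ => ?_)
  simp [mul_comm]

noncomputable def invMoment (η : ℝ) (n : ℕ) : ℝ :=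
  ∫ γ in Ioi 0, γ ^ n * exp (-γ) / (1 + η * γ)

noncomputable def logMoment (η : ℝ) (n : ℕ) : ℝ :=
  ∫ γ in Ioi 0, log (1 + η * γ) * γ ^ n * exp (-γ)

section Moments

variable {η : ℝ}

theorem integrableOn_invMoment (hη : 0 ≤ η) (n : ℕ) :
    IntegrableOn (fun γ : ℝ => γ ^ n * exp (-γ) / (1 + η * γ)) (Ioi 0) := by
  refine (integrableOn_pow_mul_exp_neg_Ioi n).mono' ?_ ?_
  · refine ContinuousOn.aestronglyMeasurable ?_ measurableSet_Ioi
    exact ContinuousOn.div (by fun_prop) (by fun_prop) fun γ (hγ : 0 < γ) => by positivity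
  · filter_upwards [ae_restrict_mem measurableSet_Ioi] with γ (hγ : 0 < γ)
    rw [norm_of_nonneg (by positivity)]
    exact div_le_self (by positivity) (by nlinarith)

theorem log_one_add_mul_mul_pow_mul_exp_neg_mem_Icc {γ : ℝ} (hη : 0 ≤ η) (hγ : 0 ≤ γ)
    (k : ℕ) :
    log (1 + η * γ) * γ ^ k * exp (-γ) ∈ Icc 0 (η * (γ ^ (k + 1) * exp (-γ))) := by
  have hlog : log (1 + η * γ) ≤ η * γ := by
    linarith [log_le_sub_one_of_pos (x := 1 + η * γ) (by positivity)]
  have := log_nonneg (le_add_of_nonneg_right (by positivity) : 1 ≤ 1 + η * γ)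
  refine ⟨by positivity, ?_⟩
  calc log (1 + η * γ) * γ ^ k * exp (-γ) ≤ η * γ * γ ^ k * exp (-γ) := by gcongr
    _ = η * (γ ^ (k + 1) * exp (-γ)) := by ring

theorem integrableOn_logMoment (hη : 0 ≤ η) (n : ℕ) :
    IntegrableOn (fun γ : ℝ => log (1 + η * γ) * γ ^ n * exp (-γ)) (Ioi 0) := by
  refine ((integrableOn_pow_mul_exp_neg_Ioi (n + 1)).const_mul η).mono' ?_ ?_
  · refine ContinuousOn.aestronglyMeasurable ?_ measurableSet_Ioi
    refine .mul (.mul (.log (by fun_prop) fun γ (hγ : 0 < γ) => ?_) (by fun_prop)) (by fun_prop)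
    positivity
  · filter_upwards [ae_restrict_mem measurableSet_Ioi] with γ (hγ : 0 < γ)
    obtain ⟨hnonneg, hle⟩ := log_one_add_mul_mul_pow_mul_exp_neg_mem_Icc hη hγ.le n
    rwa [norm_of_nonneg hnonneg]

theorem mul_invMoment_zero (hη : 0 < η) : η * invMoment η 0 = -(exp (1 / η) * negEi (1 / η)) := by
  have hsub : ∀ γ ∈ Ioi (0 : ℝ), η * (γ ^ 0 * exp (-γ) / (1 + η * γ))
      = exp (1 / η) * (exp (-(γ + 1 / η)) / (γ + 1 / η)) := fun γ (hγ : 0 < γ) => by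
    have hexp : exp (1 / η) * exp (-(γ + 1 / η)) = exp (-γ) := by rw [← exp_add]; ring_nf
    rw [← mul_div_assoc (exp _), hexp]
    field_simp
    ring
  rw [invMoment, negEi, mul_neg, neg_neg, ← integral_const_mul,
    setIntegral_congr_fun measurableSet_Ioi hsub, integral_const_mul,
    setIntegral_Ioi_comp_add_right (fun t => exp (-t) / t), zero_add]

theorem mul_invMoment_succ_add (hη : 0 ≤ η) (n : ℕ) :
    η * invMoment η (n + 1) + invMoment η n = n ! := by
  rw [invMoment, invMoment, ← integral_const_mul, ← integral_add
    ((integrableOn_invMoment hη (n + 1)).const_mul η) (integrableOn_invMoment hη n),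
    ← integral_pow_mul_exp_neg_Ioi n]
  refine setIntegral_congr_fun measurableSet_Ioi (fun γ (hγ : 0 < γ) => ?_)
  field_simp
  ring

theorem tendsto_log_one_add_mul_mul_pow_mul_exp_neg (hη : 0 ≤ η) (k : ℕ) :
    Tendsto (fun γ : ℝ => log (1 + η * γ) * γ ^ k * exp (-γ)) atTop (𝓝 0) := by
  have hbound : Tendsto (fun γ : ℝ => η * (γ ^ (k + 1) * exp (-γ))) atTop (𝓝 0) := by
    simpa using (tendsto_pow_mul_exp_neg_atTop_nhds_zero (k + 1)).const_mul η
  have hmem : ∀ᶠ γ in atTop, log (1 + η * γ) * γ ^ k * exp (-γ)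
      ∈ Icc 0 (η * (γ ^ (k + 1) * exp (-γ))) := by
    filter_upwards [eventually_ge_atTop 0] with γ hγ
    exact log_one_add_mul_mul_pow_mul_exp_neg_mem_Icc hη hγ k
  exact tendsto_of_tendsto_of_tendsto_of_le_of_le' tendsto_const_nhds hbound
    (hmem.mono fun _ h => h.1) (hmem.mono fun _ h => h.2)

theorem hasDerivAt_log_one_add_mul_mul_pow_mul_exp_neg {γ : ℝ} (hη : 0 ≤ η) (hγ : 0 ≤ γ)
    (k : ℕ) :
    HasDerivAt (fun γ : ℝ => log (1 + η * γ) * γ ^ k * exp (-γ))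
      (η * (γ ^ k * exp (-γ) / (1 + η * γ)) + k * (log (1 + η * γ) * γ ^ (k - 1) * exp (-γ))
        - log (1 + η * γ) * γ ^ k * exp (-γ)) γ := by
  have hpos : 0 < 1 + η * γ := by positivity
  have hlog : HasDerivAt (fun γ : ℝ => log (1 + η * γ)) (η / (1 + η * γ)) γ := by
    simpa using (((hasDerivAt_id γ).const_mul η).const_add 1).log hpos.ne'
  have hpow : HasDerivAt (fun γ : ℝ => γ ^ k) (k * γ ^ (k - 1)) γ := hasDerivAt_pow k γ
  have hexp : HasDerivAt (fun γ : ℝ => exp (-γ)) (-exp (-γ)) γ := by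
    simpa using (hasDerivAt_neg γ).exp
  refine ((hlog.mul hpow).mul hexp).congr_deriv ?_
  simp only [Pi.mul_apply]
  field_simp
  ring

theorem logMoment_eq (hη : 0 ≤ η) (k : ℕ) :
    logMoment η k = k * logMoment η (k - 1) + η * invMoment η k := by
  have hJ := (integrableOn_invMoment hη k).const_mul η
  have hI' := (integrableOn_logMoment hη (k - 1)).const_mul (k : ℝ)
  have hI := integrableOn_logMoment hη k
  have hJI' : IntegrableOn (fun γ : ℝ => η * (γ ^ k * exp (-γ) / (1 + η * γ))
      + k * (log (1 + η * γ) * γ ^ (k - 1) * exp (-γ))) (Ioi 0) := hJ.add hI'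
  have hFTC := integral_Ioi_of_hasDerivAt_of_tendsto'
    (fun γ hγ => hasDerivAt_log_one_add_mul_mul_pow_mul_exp_neg hη hγ k) (hJI'.sub hI)
    (tendsto_log_one_add_mul_mul_pow_mul_exp_neg hη k)
  rw [integral_sub hJI' hI, integral_add hJ hI', integral_const_mul,
    integral_const_mul] at hFTC
  simp only [mul_zero, add_zero, log_one, zero_mul, sub_zero] at hFTC
  rw [logMoment, logMoment, invMoment]
  linarith

theorem logMoment_eq_sum (hη : 0 ≤ η) (n : ℕ) :
    logMoment η n = ∑ l ∈ range (n + 1), (n ! / (n - l)! : ℝ) * (η * invMoment η (n - l)) := by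
  induction n with
  | zero => simpa using logMoment_eq hη 0
  | succ n ih =>
    rw [logMoment_eq hη, Nat.add_sub_cancel, ih, sum_range_succ' _ (n + 1), mul_sum]
    congr 1
    · refine sum_congr rfl fun l _ => ?_
      rw [Nat.add_sub_add_right, Nat.factorial_succ]
      push_cast
      ring
    · simp [(Nat.factorial_pos _).ne']

/-- The bracket of the closed form, indexed by `m = N_r − 1 − λ`. -/
noncomputable def invMomentClosedForm (η : ℝ) (m : ℕ) : ℝ :=
  (-1) ^ ((m : ℤ) - 1) * η ^ (-(m : ℤ)) * exp (1 / η) * negEi (1 / η)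
    + ∑ s ∈ Icc 1 m, ((s - 1)! : ℝ) * (-η) ^ ((s : ℤ) - m)

theorem invMomentClosedForm_succ (hη : η ≠ 0) (m : ℕ) :
    invMomentClosedForm η (m + 1) = (m ! : ℝ) - invMomentClosedForm η m / η := by
  have hsum : ∑ s ∈ Icc 1 m, ((s - 1)! : ℝ) * (-η) ^ ((s : ℤ) - (m + 1 : ℕ))
      = -(∑ s ∈ Icc 1 m, ((s - 1)! : ℝ) * (-η) ^ ((s : ℤ) - m)) / η := by
    rw [neg_div, sum_div, ← sum_neg_distrib]
    refine sum_congr rfl fun s _ => ?_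
    rw [show (s : ℤ) - (m + 1 : ℕ) = (s - m) + -1 by push_cast; ring,
      zpow_add₀ (neg_ne_zero.2 hη)]
    field_simp
  rw [invMomentClosedForm, invMomentClosedForm, sum_Icc_succ_top (by omega), hsum]
  push_cast
  rw [show (m : ℤ) + 1 - 1 = (m - 1) + 1 by ring, show -((m : ℤ) + 1) = -m + -1 by ring,
    zpow_add₀ (by norm_num), zpow_add₀ hη]
  simp only [sub_self, zpow_zero, zpow_one, zpow_neg_one]
  field_simp
  ring

theorem mul_invMoment_eq_closedForm (hη : 0 < η) (m : ℕ) :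
    η * invMoment η m = invMomentClosedForm η m := by
  induction m with
  | zero => simp [mul_invMoment_zero hη, invMomentClosedForm]
  | succ m ih =>
    rw [invMomentClosedForm_succ hη.ne', ← ih, ← mul_invMoment_succ_add hη.le m]
    field_simp
    ring

theorem sum_closedForm_eq_logMoment (hη : 0 < η) {N : ℕ} (hN : 1 ≤ N) :
    ∑ l ∈ range N, ((N - 1)! / (N - 1 - l)! : ℝ) *
        ((-1 : ℝ) ^ ((N : ℤ) - l - 2) * η ^ (-((N : ℤ) - 1 - l)) * exp (1 / η) * negEi (1 / η)
          + ∑ s ∈ Icc 1 (N - 1 - l), ((s - 1)! : ℝ) * (-η) ^ (-((N : ℤ) - 1 - l - s)))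
      = logMoment η (N - 1) := by
  obtain ⟨n, rfl⟩ : ∃ n, N = n + 1 := ⟨N - 1, by omega⟩
  rw [Nat.add_sub_cancel, logMoment_eq_sum hη.le]
  refine sum_congr rfl fun l hl => ?_
  have hm : ((n - l : ℕ) : ℤ) = n - l := by have := mem_range.1 hl; omega
  rw [mul_invMoment_eq_closedForm hη, invMomentClosedForm, hm]
  push_cast
  ring_nf

end Moments

/-- Closed-form ergodic capacity of an intra-cell NOMA user in SSK-NOMA (Eqs. (39)–(40)):
for `η₁ > η₂ > 0` (with `η₁ = ∑_{p=i}^{L} a_p ρ σ_i²` and `η₂ = ∑_{p=i+1}^{L} a_p ρ σ_i²`),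
`∫₀^∞ [log₂(1 + η₁γ) − log₂(1 + η₂γ)] γ^{N_r−1} e^{−γ} / (N_r−1)! dγ
 = ∑_{t=1}^{2} (−1)^{t−1} (log₂ e / (N_r−1)!) ∑_{λ=0}^{N_r−1} ((N_r−1)!/(N_r−1−λ)!)
     [ (−1)^{N_r−λ−2} η_t^{−(N_r−1−λ)} e^{1/η_t} Ei(−1/η_t)
       + ∑_{ς=1}^{N_r−1−λ} (ς−1)! (−η_t)^{−(N_r−1−λ−ς)} ]`,
where the index `t ∈ {1, 2}` is modelled by `Fin 2` (so `(−1)^{t−1} = (−1)^{(t : ℕ)}`). -/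
theorem stmt11 (Nr : ℕ) (hNr : 1 ≤ Nr) (η : Fin 2 → ℝ)
    (h12 : η 0 > η 1) (h2 : η 1 > 0) :
    ∫ γ in Set.Ioi (0 : ℝ),
        (Real.logb 2 (1 + η 0 * γ) - Real.logb 2 (1 + η 1 * γ)) *
          γ ^ (Nr - 1) * Real.exp (-γ) / (Nat.factorial (Nr - 1) : ℝ)
      = ∑ t : Fin 2, (-1 : ℝ) ^ (t : ℕ) *
          (Real.logb 2 (Real.exp 1) / (Nat.factorial (Nr - 1) : ℝ)) *
          ∑ l ∈ Finset.range Nr,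
            ((Nat.factorial (Nr - 1) : ℝ) / (Nat.factorial (Nr - 1 - l) : ℝ)) *
              ((-1 : ℝ) ^ ((Nr : ℤ) - (l : ℤ) - 2) * η t ^ (-((Nr : ℤ) - 1 - (l : ℤ))) *
                  Real.exp (1 / η t) * negEi (1 / η t)
                + ∑ s ∈ Finset.Icc 1 (Nr - 1 - l),
                    (Nat.factorial (s - 1) : ℝ) *
                      (-η t) ^ (-((Nr : ℤ) - 1 - (l : ℤ) - (s : ℤ)))) := by
  have hη₀ : 0 < η 0 := h2.trans h12
  have hintegrand : ∀ γ : ℝ, (logb 2 (1 + η 0 * γ) - logb 2 (1 + η 1 * γ)) *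
      γ ^ (Nr - 1) * exp (-γ) / (Nr - 1)! = (log 2 * (Nr - 1)!)⁻¹ *
        (log (1 + η 0 * γ) * γ ^ (Nr - 1) * exp (-γ)
          - log (1 + η 1 * γ) * γ ^ (Nr - 1) * exp (-γ)) := fun γ => by
    simp only [logb]
    field_simp
  simp only [hintegrand, Fin.sum_univ_two, Fin.val_zero, Fin.val_one,
    sum_closedForm_eq_logMoment hη₀ hNr, sum_closedForm_eq_logMoment h2 hNr]
  rw [integral_const_mul, integral_sub (integrableOn_logMoment hη₀.le _)
    (integrableOn_logMoment h2.le _), logb, log_exp, logMoment, logMoment]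
  field_simp
  ring
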